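/- Let Y ≥ 1 and d ≥ 2 be an integer, and set D = 2^{d-1}. For every real γ, |∑_{1 ≤ y ≤ Y} e(γ y^d)|^D ≤ (2Y)^{D-d} ∑_{|h_1| < Y} ⋯ ∑_{|h_{d-1}| < Y} |∑_{y ∈ I(h)} e(d! h_1 ⋯ h_{d-1} y γ)|, where I(h) is an interval of integers contained in [1, Y] depending on h = (h_1,…,h_{d-1}). -/

import Mathlib

/-!
When `b - a < N`, squaring `S = ∑_{a ≤ y ≤ b} e(f y)` and substituting `z = y + h` gives
`|S|² ≤ ∑_{|h| < N} |∑_y e(Δ_h f y)|`, the inner sum running over the subinterval where both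
`y` and `y + h` lie in `[a, b]`. Raising this to the power `2^k` with the power-mean inequality
over the `2N - 1` shifts and iterating gives `k` successive differences `Δ_{h_k} ⋯ Δ_{h_1} f`.
Each forward difference `P ↦ P(X + h) - P` lowers the degree of a polynomial by one and
multiplies its top coefficient by `(deg P) h`, so after `d - 1` steps `γ y^d` becomes
`d! h_1 ⋯ h_{d-1} γ y + c(h)`, and the constant `c(h)` disappears in the absolute value.
-/

/-- `e(α) = exp(2πiα)`. -/
noncomputable def eTwoPi (x : ℝ) : ℂ := Complex.exp (2 * Real.pi * Complex.I * x)

open Finset Polynomial ComplexConjugate fwdDiff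

lemma eTwoPi_add (x y : ℝ) : eTwoPi (x + y) = eTwoPi x * eTwoPi y := by
  rw [eTwoPi, eTwoPi, eTwoPi, ← Complex.exp_add]
  push_cast
  ring_nf

lemma norm_eTwoPi (x : ℝ) : ‖eTwoPi x‖ = 1 := by
  rw [eTwoPi, Complex.norm_exp]
  simp

lemma eTwoPi_mul_conj (x y : ℝ) : eTwoPi x * conj (eTwoPi y) = eTwoPi (x - y) := by
  rw [eTwoPi, eTwoPi, eTwoPi, ← Complex.exp_conj, ← Complex.exp_add]
  simp only [map_mul, Complex.conj_I, Complex.conj_ofReal, map_ofNat]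
  push_cast
  ring_nf

theorem norm_sum_Icc_sq_le {𝕜 : Type*} [RCLike 𝕜] (u : ℤ → 𝕜) {N : ℕ} {a b : ℤ}
    (hab : b - a < N) :
    ‖∑ y ∈ Icc a b, u y‖ ^ 2 ≤ ∑ h ∈ Ioo (-(N : ℤ)) N,
      ‖∑ y ∈ Icc (max a (a - h)) (min b (b - h)), u (y + h) * conj (u y)‖ := by
  have hexpand : (∑ y ∈ Icc a b, u y) * conj (∑ y ∈ Icc a b, u y) = ∑ h ∈ Ioo (-(N : ℤ)) N,
      ∑ y ∈ Icc (max a (a - h)) (min b (b - h)), u (y + h) * conj (u y) := by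
    rw [map_sum, sum_mul_sum, ← sum_product', sum_sigma']
    refine sum_nbij' (fun p ↦ ⟨p.1 - p.2, p.2⟩) (fun q ↦ (q.2 + q.1, q.2)) ?_ ?_ ?_ ?_ ?_
    · rintro ⟨z, y⟩ hzy
      simp only [mem_product, mem_sigma, mem_Icc, mem_Ioo, max_le_iff, le_min_iff] at hzy ⊢
      omega
    · rintro ⟨h, y⟩ hhy
      simp only [mem_product, mem_sigma, mem_Icc, mem_Ioo, max_le_iff, le_min_iff] at hhy ⊢
      omega
    · rintro ⟨z, y⟩ -
      simp
    · rintro ⟨h, y⟩ -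
      simp
    · rintro ⟨z, y⟩ -
      simp
  calc ‖∑ y ∈ Icc a b, u y‖ ^ 2
      = ‖(∑ y ∈ Icc a b, u y) * conj (∑ y ∈ Icc a b, u y)‖ := by
        rw [norm_mul, RCLike.norm_conj, sq]
    _ ≤ _ := hexpand ▸ norm_sum_le _ _

lemma norm_sum_eTwoPi_sq_le (f : ℤ → ℝ) {N : ℕ} {a b : ℤ} (hab : b - a < N) :
    ‖∑ y ∈ Icc a b, eTwoPi (f y)‖ ^ 2 ≤ ∑ h ∈ Ioo (-(N : ℤ)) N,
      ‖∑ y ∈ Icc (max a (a - h)) (min b (b - h)), eTwoPi (Δ_[h] f y)‖ := by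
  simpa only [eTwoPi_mul_conj, fwdDiff] using norm_sum_Icc_sq_le (fun y ↦ eTwoPi (f y)) hab

def mixedFwdDiff {M G : Type*} [AddCommMonoid M] [AddCommGroup G] :
    {k : ℕ} → (Fin k → M) → (M → G) → M → G
  | 0, _, f => f
  | _ + 1, h, f => mixedFwdDiff (Fin.tail h) (Δ_[h 0] f)

lemma sum_piFinset_fin_succ {M β : Type*} [AddCommMonoid β] {k : ℕ} (s : Finset M)
    (g : (Fin (k + 1) → M) → β) :
    ∑ h ∈ Fintype.piFinset (fun _ ↦ s), g h =
      ∑ x ∈ s, ∑ h ∈ Fintype.piFinset (fun _ : Fin k ↦ s), g (Fin.cons x h) := by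
  rw [← sum_product']
  exact sum_equiv (Fin.consEquiv fun _ ↦ M).symm
    (fun h ↦ by simp [Fin.forall_fin_succ, Fin.consEquiv, Fin.tail])
    (fun h _ ↦ by simp [Fin.consEquiv])

lemma card_Ioo_neg_le (N : ℕ) : (#(Ioo (-(N : ℤ)) N) : ℝ) ≤ 2 * N := by
  rw [Int.card_Ioo]
  exact_mod_cast (show ((N - -N - 1 : ℤ).toNat : ℤ) ≤ 2 * N by omega)

theorem norm_sum_eTwoPi_pow_le_sum_mixedFwdDiff (N k : ℕ) (f : ℤ → ℝ) {a b : ℤ}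
    (hab : b - a < N) :
    ∃ lo hi : (Fin k → ℤ) → ℤ, (∀ h, a ≤ lo h ∧ hi h ≤ b) ∧
      ‖∑ y ∈ Icc a b, eTwoPi (f y)‖ ^ 2 ^ k ≤ (2 * N : ℝ) ^ (2 ^ k - (k + 1)) *
        ∑ h ∈ Fintype.piFinset (fun _ ↦ Ioo (-(N : ℤ)) N),
          ‖∑ y ∈ Icc (lo h) (hi h), eTwoPi (mixedFwdDiff h f y)‖ := by
  induction k generalizing f a b with
  | zero => exact ⟨fun _ ↦ a, fun _ ↦ b, fun _ ↦ ⟨le_rfl, le_rfl⟩, by simp [mixedFwdDiff]⟩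
  | succ k ih =>
    have hsub : ∀ h₀ : ℤ, min b (b - h₀) - max a (a - h₀) < N := fun h₀ ↦ by omega
    choose lo hi hbounds hle using fun h₀ ↦ ih (Δ_[h₀] f) (hsub h₀)
    refine ⟨fun h ↦ lo (h 0) (Fin.tail h), fun h ↦ hi (h 0) (Fin.tail h), fun h ↦ ?_, ?_⟩
    · obtain ⟨hlo, hhi⟩ := hbounds (h 0) (Fin.tail h)
      exact ⟨(le_max_left _ _).trans hlo, hhi.trans (min_le_left _ _)⟩
    set H := Ioo (-(N : ℤ)) N
    set T : ℤ → ℝ := fun h₀ ↦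
      ‖∑ y ∈ Icc (max a (a - h₀)) (min b (b - h₀)), eTwoPi (Δ_[h₀] f y)‖
    have hk : 2 ^ k = (2 ^ k - 1) + 1 := (Nat.sub_add_cancel Nat.one_le_two_pow).symm
    have hexp : 2 ^ k - 1 + (2 ^ k - (k + 1)) = 2 ^ (k + 1) - (k + 1 + 1) := by
      have := Nat.lt_two_pow_self (n := k)
      rw [pow_succ]
      omega
    calc ‖∑ y ∈ Icc a b, eTwoPi (f y)‖ ^ 2 ^ (k + 1)
        = (‖∑ y ∈ Icc a b, eTwoPi (f y)‖ ^ 2) ^ 2 ^ k := by rw [← pow_mul, pow_succ']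
      _ ≤ (∑ h₀ ∈ H, T h₀) ^ 2 ^ k := by gcongr; exact norm_sum_eTwoPi_sq_le f hab
      _ ≤ (#H : ℝ) ^ (2 ^ k - 1) * ∑ h₀ ∈ H, T h₀ ^ 2 ^ k := by
        simpa only [← hk] using
          pow_sum_le_card_mul_sum_pow (s := H) (f := T) (fun _ _ ↦ norm_nonneg _) (2 ^ k - 1)
      _ ≤ (2 * N : ℝ) ^ (2 ^ k - 1) * ∑ h₀ ∈ H, (2 * N : ℝ) ^ (2 ^ k - (k + 1)) *
            ∑ h ∈ Fintype.piFinset (fun _ ↦ H),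
              ‖∑ y ∈ Icc (lo h₀ h) (hi h₀ h), eTwoPi (mixedFwdDiff h (Δ_[h₀] f) y)‖ := by
        refine mul_le_mul (pow_le_pow_left₀ (Nat.cast_nonneg _) (card_Ioo_neg_le N) _)
          (sum_le_sum fun h₀ _ ↦ hle h₀) (by positivity) (by positivity)
      _ = _ := by
        rw [← mul_sum, ← mul_assoc, ← pow_add, hexp, sum_piFinset_fin_succ]
        rfl

section

variable {R : Type*} [CommRing R]

lemma Polynomial.natDegree_taylor_sub_self_le {P : R[X]} {n : ℕ} (hP : P.natDegree ≤ n + 1)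
    (c : R) :
    (taylor c P - P).natDegree ≤ n := by
  rcases hP.lt_or_eq with hlt | heq
  · exact (natDegree_sub_le _ _).trans (by rw [natDegree_taylor]; omega)
  by_cases hzero : taylor c P - P = 0
  · simp [hzero]
  have hP0 : P ≠ 0 := by rintro rfl; simp at heq
  have := natDegree_lt_natDegree hzero <| degree_sub_lt_left (degree_taylor P c)
    ((taylor_eq_zero c P).not.mpr hP0) (leadingCoeff_taylor c P)
  rw [natDegree_taylor] at this
  omega

lemma Polynomial.coeff_taylor_sub_self {P : R[X]} {n : ℕ} (hP : P.natDegree ≤ n + 1) (c : R) :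
    (taylor c P - P).coeff n = (n + 1) * c * P.coeff (n + 1) := by
  have hlin := eq_X_add_C_of_natDegree_le_one (p := hasseDeriv n P)
    ((natDegree_hasseDeriv_le P n).trans (by omega))
  rw [coeff_sub, taylor_coeff, hlin]
  simp only [eval_add, eval_mul, eval_C, eval_X, hasseDeriv_coeff, zero_add, Nat.choose_self,
    add_comm 1 n, Nat.choose_succ_self_right]
  push_cast
  ring

lemma fwdDiff_eval_intCast (P : R[X]) (c : ℤ) :
    Δ_[c] (fun y : ℤ ↦ P.eval (y : R)) = fun y : ℤ ↦ (taylor (c : R) P - P).eval (y : R) := by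
  ext y
  simp [fwdDiff, taylor_eval]

theorem exists_mixedFwdDiff_eval_intCast {k n : ℕ} (h : Fin k → ℤ) {P : R[X]}
    (hP : P.natDegree ≤ n + k) :
    ∃ Q : R[X], Q.natDegree ≤ n ∧
      Q.coeff n = (n + k).descFactorial k * (∏ i, (h i : R)) * P.coeff (n + k) ∧
      mixedFwdDiff h (fun y : ℤ ↦ P.eval (y : R)) = fun y : ℤ ↦ Q.eval (y : R) := by
  induction k generalizing P with
  | zero => exact ⟨P, hP, by simp, rfl⟩
  | succ k ih =>
    obtain ⟨Q, hQdeg, hQcoeff, hQ⟩ :=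
      ih (Fin.tail h) (natDegree_taylor_sub_self_le (n := n + k) hP (h 0 : R))
    refine ⟨Q, hQdeg, ?_, by rw [← hQ, ← fwdDiff_eval_intCast]; rfl⟩
    rw [hQcoeff, coeff_taylor_sub_self (by omega), Fin.prod_univ_succ, ← add_assoc,
      Nat.succ_descFactorial_succ]
    push_cast
    simp only [Fin.tail]
    ring

theorem exists_mixedFwdDiff_pow {k : ℕ} (h : Fin k → ℤ) (γ : R) :
    ∃ c : R, mixedFwdDiff h (fun y : ℤ ↦ γ * (y : R) ^ (k + 1)) =
      fun y : ℤ ↦ c + (k + 1).factorial * (∏ j, (h j : R)) * y * γ := by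
  obtain ⟨Q, hQdeg, hQcoeff, hQ⟩ := exists_mixedFwdDiff_eval_intCast (n := 1) h
    (P := C γ * X ^ (k + 1)) (by rw [add_comm 1 k]; exact natDegree_C_mul_X_pow_le _ _)
  have hfact : (1 + k).descFactorial k = (k + 1).factorial := by
    simpa [add_comm 1 k] using Nat.factorial_mul_descFactorial (show k ≤ 1 + k by omega)
  refine ⟨Q.coeff 0, funext fun y ↦ ?_⟩
  simp only [eval_mul, eval_C, eval_pow, eval_X] at hQ
  rw [hQ]
  conv_lhs => rw [eq_X_add_C_of_natDegree_le_one hQdeg]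
  rw [hQcoeff, hfact, add_comm 1 k, coeff_C_mul_X_pow, if_pos rfl]
  simp only [eval_add, eval_mul, eval_C, eval_X]
  ring

end

lemma norm_sum_eTwoPi_const_add (s : Finset ℤ) (c : ℝ) (g : ℤ → ℝ) :
    ‖∑ y ∈ s, eTwoPi (c + g y)‖ = ‖∑ y ∈ s, eTwoPi (g y)‖ := by
  simp only [eTwoPi_add, ← mul_sum, norm_mul, norm_eTwoPi, one_mul]

lemma norm_sum_eTwoPi_mixedFwdDiff_pow {k : ℕ} (h : Fin k → ℤ) (γ : ℝ) (s : Finset ℤ) :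
    ‖∑ y ∈ s, eTwoPi (mixedFwdDiff h (fun y : ℤ ↦ γ * (y : ℝ) ^ (k + 1)) y)‖ =
      ‖∑ y ∈ s, eTwoPi ((k + 1).factorial * (∏ j, (h j : ℝ)) * y * γ)‖ := by
  obtain ⟨c, hc⟩ := exists_mixedFwdDiff_pow h γ
  rw [hc, norm_sum_eTwoPi_const_add]

lemma sum_Icc_natCast {β : Type*} [AddCommMonoid β] (g : ℤ → β) (a b : ℕ) :
    ∑ n ∈ Icc a b, g n = ∑ z ∈ Icc (a : ℤ) b, g z := by
  rw [← sum_image fun _ _ _ _ h ↦ Nat.cast_injective h]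
  congr 1
  ext z
  simp only [mem_image, mem_Icc]
  constructor
  · rintro ⟨n, hn, rfl⟩
    omega
  · intro hz
    exact ⟨z.toNat, by omega, by omega⟩

/-- Weyl's differencing inequality: with `D = 2^{d-1}`,
`|∑_{1≤y≤Y} e(γ y^d)|^D ≤ (2Y)^{D-d} ∑_{|h₁|<Y} ⋯ ∑_{|h_{d-1}|<Y} |∑_{y ∈ I(h)} e(d! h₁⋯h_{d-1} y γ)|`,
where each `I(h)` is an interval of integers contained in `[1,Y]`. -/
theorem stmt_10 (Y : ℝ) (hY : 1 ≤ Y) (d : ℕ) (hd : 2 ≤ d) (γ : ℝ) :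
    ∃ I : (Fin (d - 1) → ℤ) → Finset ℤ,
      (∀ h, ∃ a b : ℤ, I h = Finset.Icc a b) ∧
      (∀ h, ∀ y ∈ I h, 1 ≤ y ∧ (y : ℝ) ≤ Y) ∧
      ‖∑ y ∈ Finset.Icc 1 ⌊Y⌋₊, eTwoPi (γ * (y : ℝ) ^ d)‖ ^ (2 ^ (d - 1)) ≤
        (2 * Y) ^ (2 ^ (d - 1) - d) *
          ∑ h ∈ Fintype.piFinset (fun _ : Fin (d - 1) => Finset.Ioo (-⌈Y⌉) ⌈Y⌉),
            ‖∑ y ∈ I h, eTwoPi ((d.factorial : ℝ) * (∏ j, (h j : ℝ)) * (y : ℝ) * γ)‖ := by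
  obtain ⟨k, rfl⟩ : ∃ k, d = k + 1 := ⟨d - 1, by omega⟩
  simp only [Nat.add_sub_cancel]
  set N := ⌊Y⌋₊
  have hNY : (N : ℝ) ≤ Y := Nat.floor_le (by linarith)
  have hNceil : (N : ℤ) ≤ ⌈Y⌉ := by exact_mod_cast hNY.trans (Int.le_ceil Y)
  obtain ⟨lo, hi, hbounds, hweyl⟩ :=
    norm_sum_eTwoPi_pow_le_sum_mixedFwdDiff N k (fun y : ℤ ↦ γ * (y : ℝ) ^ (k + 1)) (a := 1) (b := N) (by omega)
  refine ⟨fun h ↦ Icc (lo h) (hi h), fun h ↦ ⟨_, _, rfl⟩, fun h y hy ↦ ?_, ?_⟩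
  · obtain ⟨hlo, hhi⟩ := mem_Icc.mp hy
    exact ⟨(hbounds h).1.trans hlo, (Int.cast_le.mpr (hhi.trans (hbounds h).2)).trans hNY⟩
  have hlhs : ∑ y ∈ Icc 1 N, eTwoPi (γ * (y : ℝ) ^ (k + 1)) =
      ∑ y ∈ Icc (1 : ℤ) N, eTwoPi (γ * (y : ℝ) ^ (k + 1)) := by
    simpa using sum_Icc_natCast (fun y : ℤ ↦ eTwoPi (γ * (y : ℝ) ^ (k + 1))) 1 N
  rw [hlhs]
  refine hweyl.trans (mul_le_mul (by gcongr) ?_ (by positivity) (by positivity))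
  simp only [norm_sum_eTwoPi_mixedFwdDiff_pow]
  refine sum_le_sum_of_subset_of_nonneg (Fintype.piFinset_subset _ _ fun _ ↦ ?_)
    fun _ _ _ ↦ norm_nonneg _
  exact Ioo_subset_Ioo (by omega) hNceil
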